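/- arXiv:1505.06040 — 2 statements merged into one kernel-verified Lean document; each statement's English description precedes it below -/
import Mathlib

section
/- For coprime positive integers p, q with p ≥ 2 and q ≥ 3, the graph S(p,q) (the Cayley graph of Z/(p+q) with generating set {1,p}) contains K5 as a minor, and hence is nonplanar. -/
/-- `H` is a minor of `G`: there is a family of nonempty, pairwise disjoint, connected
branch sets in `G`, one for each vertex of `H`, such that adjacent vertices of `H`
have branch sets joined by an edge of `G`. -/
def HasMinor {V W : Type*} (G : SimpleGraph V) (H : SimpleGraph W) : Prop :=
  ∃ f : W → Set V,
    (∀ w, (f w).Nonempty) ∧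
    (∀ w, (G.induce (f w)).Connected) ∧
    (∀ w₁ w₂, w₁ ≠ w₂ → Disjoint (f w₁) (f w₂)) ∧
    (∀ w₁ w₂, H.Adj w₁ w₂ → ∃ x ∈ f w₁, ∃ y ∈ f w₂, G.Adj x y)

/-- Planarity via Wagner's characterization: a graph is planar iff it has neither a
`K₅` minor nor a `K₃,₃` minor. -/
def IsPlanar {V : Type*} (G : SimpleGraph V) : Prop :=
  ¬ HasMinor G (⊤ : SimpleGraph (Fin 5)) ∧
  ¬ HasMinor G (completeBipartiteGraph (Fin 3) (Fin 3))

/-- The graph `S(p,q)`: vertex set `ZMod (p+q)`, with cycle edges `{j, j+1}` and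
chords `{j, j+p}` for all `j` (the Cayley graph of `ZMod (p+q)` w.r.t. `{1, p}`). -/
def SGraph (p q : ℕ) : SimpleGraph (ZMod (p + q)) :=
  SimpleGraph.fromRel (fun x y => y = x + 1 ∨ y = x + (p : ZMod (p + q)))

lemma hasMinor_K5_of_chains {V : Type*} (G : SimpleGraph V) (g : Fin 5 → ℕ → V)
    (L : Fin 5 → ℕ)
    (hchain : ∀ w i, i < L w → G.Adj (g w i) (g w (i+1)))
    (hdisj : ∀ w₁ w₂, w₁ ≠ w₂ → ∀ i ≤ L w₁, ∀ j ≤ L w₂, g w₁ i ≠ g w₂ j)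
    (hadj : ∀ w₁ w₂ : Fin 5, w₁ ≠ w₂ → ∃ i ≤ L w₁, ∃ j ≤ L w₂, G.Adj (g w₁ i) (g w₂ j)) :
    HasMinor G (⊤ : SimpleGraph (Fin 5)) := by
  refine ⟨fun w => g w '' Set.Iic (L w), ?_, ?_, ?_, ?_⟩
  · exact fun w => ⟨g w 0, 0, Set.mem_Iic.2 (Nat.zero_le _), rfl⟩
  · intro w
    rw [SimpleGraph.connected_iff]
    refine ⟨?_, ⟨⟨g w 0, ⟨0, Set.mem_Iic.2 (Nat.zero_le _), rfl⟩⟩⟩⟩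
    have key : ∀ i (h : i ≤ L w),
        (G.induce (g w '' Set.Iic (L w))).Reachable
          ⟨g w 0, ⟨0, Set.mem_Iic.2 (Nat.zero_le _), rfl⟩⟩
          ⟨g w i, ⟨i, Set.mem_Iic.2 h, rfl⟩⟩ := by
      intro i
      induction i with
      | zero => exact fun _ => SimpleGraph.Reachable.refl _
      | succ n ih =>
        intro h
        refine (ih (by omega)).trans (SimpleGraph.Adj.reachable ?_)
        exact hchain w n (by omega)
    rintro ⟨u, hu⟩ ⟨v, hv⟩
    obtain ⟨i, hi, rfl⟩ := hu
    obtain ⟨j, hj, rfl⟩ := hv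
    exact (key i (Set.mem_Iic.1 hi)).symm.trans (key j (Set.mem_Iic.1 hj))
  · intro w₁ w₂ hne
    rw [Set.disjoint_left]
    rintro x ⟨i, hi, rfl⟩ ⟨j, hj, hx⟩
    exact hdisj w₁ w₂ hne i (Set.mem_Iic.1 hi) j (Set.mem_Iic.1 hj) hx.symm
  · intro w₁ w₂ h
    obtain ⟨i, hi, j, hj, hG⟩ := hadj w₁ w₂ (by simpa using h)
    exact ⟨g w₁ i, ⟨i, Set.mem_Iic.2 hi, rfl⟩, g w₂ j, ⟨j, Set.mem_Iic.2 hj, rfl⟩, hG⟩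

lemma zmod_natCast_inj {n a b : ℕ} (ha : a < n) (hb : b < n)
    (h : (a : ZMod n) = b) : a = b := by
  haveI : NeZero n := ⟨by omega⟩
  have := congrArg ZMod.val h
  rwa [ZMod.val_cast_of_lt ha, ZMod.val_cast_of_lt hb] at this

lemma zmod_natCast_ne {n : ℕ} {a : ℕ} (ha : 0 < a) (hb : a < n) :
    (a : ZMod n) ≠ 0 := by
  intro h
  have := zmod_natCast_inj hb (show 0 < n by omega) (by simpa using h)
  omega

lemma sg_adj_one (p q : ℕ) (h : 1 < p + q) (x : ZMod (p+q)) :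
    (SGraph p q).Adj x (x + 1) := by
  haveI : Fact (1 < p + q) := ⟨h⟩
  rw [SGraph, SimpleGraph.fromRel_adj]
  refine ⟨fun hx => ?_, Or.inl (Or.inl rfl)⟩
  exact one_ne_zero ((left_eq_add).1 hx)

lemma sg_adj_p (p q : ℕ) (hp : 0 < p) (hq : 0 < q) (x : ZMod (p+q)) :
    (SGraph p q).Adj x (x + (p : ZMod (p+q))) := by
  rw [SGraph, SimpleGraph.fromRel_adj]
  refine ⟨fun hx => ?_, Or.inl (Or.inr rfl)⟩
  exact zmod_natCast_ne hp (by omega) ((left_eq_add).1 hx)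

lemma sg_zsum (p q : ℕ) : ((q:ℕ) : ZMod (p+q)) + ((p:ℕ) : ZMod (p+q)) = 0 := by
  have := ZMod.natCast_self (p+q)
  push_cast at this
  linear_combination this

lemma sg_adj_q (p q : ℕ) (hp : 0 < p) (hq : 0 < q) (x : ZMod (p+q)) :
    (SGraph p q).Adj x (x + (q : ZMod (p+q))) := by
  rw [SGraph, SimpleGraph.fromRel_adj]
  refine ⟨fun hx => ?_, Or.inr (Or.inr ?_)⟩
  · exact zmod_natCast_ne hq (by omega) ((left_eq_add).1 hx)
  · rw [add_assoc, sg_zsum, add_zero]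

lemma sg_master (p q k m : ℕ) (hk : 3 ≤ k) (hkm : k < m) (hn : p + q = k + m)
    (hchord : ∀ x : ZMod (p+q), (SGraph p q).Adj x (x + ((k:ℕ) : ZMod (p+q)))) :
    HasMinor (SGraph p q) (⊤ : SimpleGraph (Fin 5)) := by
  have hn2 : 1 < p + q := by omega
  have hz : ((k:ℕ) : ZMod (p+q)) + ((m:ℕ) : ZMod (p+q)) = 0 := by
    have h0 : ((k + m : ℕ) : ZMod (p+q)) = 0 := by
      rw [← hn]; exact ZMod.natCast_self _
    push_cast at h0
    exact h0
  have adj1 : ∀ a b : ℕ, (b = a + 1 ∨ b + (k+m) = a + 1) →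
      (SGraph p q).Adj (a : ZMod (p+q)) (b : ZMod (p+q)) := by
    intro a b h
    have base := sg_adj_one p q hn2 (a : ZMod (p+q))
    have hcast : ((b:ℕ) : ZMod (p+q)) = (a : ZMod (p+q)) + 1 := by
      rcases h with rfl | h
      · push_cast; ring
      · have e : ((b + (k+m) : ℕ) : ZMod (p+q)) = ((a+1 : ℕ) : ZMod (p+q)) := by rw [h]
        push_cast at e
        linear_combination e - hz
    rwa [← hcast] at base
  have adjk : ∀ a b : ℕ, (b = a + k ∨ b + (k+m) = a + k) →
      (SGraph p q).Adj (a : ZMod (p+q)) (b : ZMod (p+q)) := by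
    intro a b h
    have base := hchord (a : ZMod (p+q))
    have hcast : ((b:ℕ) : ZMod (p+q)) = (a : ZMod (p+q)) + (k : ZMod (p+q)) := by
      rcases h with rfl | h
      · push_cast; ring
      · have e : ((b + (k+m) : ℕ) : ZMod (p+q)) = ((a+k : ℕ) : ZMod (p+q)) := by rw [h]
        push_cast at e
        linear_combination e - hz
    rwa [← hcast] at base
  apply hasMinor_K5_of_chains (SGraph p q)
    (fun w i => ((![0,1,2,k+1,m+1] w + i : ℕ) : ZMod (p+q)))
    ![0,0,k-2,m-k-1,k-2]
  · intro w i hi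
    exact adj1 _ _ (Or.inl (by omega))
  · intro w₁ w₂ hne i hi j hj heq
    clear adj1 adjk hchord hz
    have hb1 : ![0,1,2,k+1,m+1] w₁ + i < p + q := by
      rw [hn]; fin_cases w₁ <;> simp only [Fin.zero_eta, Fin.mk_one, Fin.reduceFinMk, Fin.isValue, Matrix.cons_val_zero, Matrix.cons_val_one, Matrix.head_cons, Matrix.cons_val_two, Matrix.tail_cons, Matrix.cons_val_three, Matrix.cons_val_four] at hi ⊢ <;> omega
    have hb2 : ![0,1,2,k+1,m+1] w₂ + j < p + q := by
      rw [hn]; fin_cases w₂ <;> simp only [Fin.zero_eta, Fin.mk_one, Fin.reduceFinMk, Fin.isValue, Matrix.cons_val_zero, Matrix.cons_val_one, Matrix.head_cons, Matrix.cons_val_two, Matrix.tail_cons, Matrix.cons_val_three, Matrix.cons_val_four] at hj ⊢ <;> omega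
    have hnat := zmod_natCast_inj hb1 hb2 heq
    clear heq hb1 hb2
    fin_cases w₁ <;> fin_cases w₂ <;>
      first
        | exact absurd rfl hne
        | (simp only [Fin.zero_eta, Fin.mk_one, Fin.reduceFinMk, Fin.isValue, Matrix.cons_val_zero, Matrix.cons_val_one, Matrix.head_cons, Matrix.cons_val_two, Matrix.tail_cons, Matrix.cons_val_three, Matrix.cons_val_four] at hnat hi hj; omega)
  · intro w₁ w₂ hne
    fin_cases w₁ <;> fin_cases w₂ <;>
      first
        | exact absurd rfl hne
        | simp only [Fin.zero_eta, Fin.mk_one, Fin.reduceFinMk, Fin.isValue, Matrix.cons_val_zero, Matrix.cons_val_one, Matrix.head_cons, Matrix.cons_val_two, Matrix.tail_cons, Matrix.cons_val_three, Matrix.cons_val_four]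
    · exact ⟨0, Nat.zero_le _, 0, Nat.zero_le _, adj1 _ _ (Or.inl (by omega))⟩
    · exact ⟨0, Nat.zero_le _, k-2, by omega, adjk _ _ (Or.inl (by omega))⟩
    · exact ⟨0, Nat.zero_le _, m-k-1, by omega, (adjk _ _ (Or.inr (by omega))).symm⟩
    · exact ⟨0, Nat.zero_le _, k-2, by omega, (adj1 _ _ (Or.inr (by omega))).symm⟩
    · exact ⟨0, Nat.zero_le _, 0, Nat.zero_le _, (adj1 _ _ (Or.inl (by omega))).symm⟩
    · exact ⟨0, Nat.zero_le _, 0, Nat.zero_le _, adj1 _ _ (Or.inl (by omega))⟩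
    · exact ⟨0, Nat.zero_le _, 0, Nat.zero_le _, adjk _ _ (Or.inl (by omega))⟩
    · exact ⟨0, Nat.zero_le _, 0, Nat.zero_le _, (adjk _ _ (Or.inr (by omega))).symm⟩
    · exact ⟨k-2, by omega, 0, Nat.zero_le _, (adjk _ _ (Or.inl (by omega))).symm⟩
    · exact ⟨0, Nat.zero_le _, 0, Nat.zero_le _, (adj1 _ _ (Or.inl (by omega))).symm⟩
    · exact ⟨k-2, by omega, 0, Nat.zero_le _, adj1 _ _ (Or.inl (by omega))⟩
    · exact ⟨0, Nat.zero_le _, 1, by omega, (adjk _ _ (Or.inr (by omega))).symm⟩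
    · exact ⟨m-k-1, by omega, 0, Nat.zero_le _, adjk _ _ (Or.inr (by omega))⟩
    · exact ⟨0, Nat.zero_le _, 0, Nat.zero_le _, (adjk _ _ (Or.inl (by omega))).symm⟩
    · exact ⟨0, Nat.zero_le _, k-2, by omega, (adj1 _ _ (Or.inl (by omega))).symm⟩
    · exact ⟨m-k-1, by omega, 0, Nat.zero_le _, adj1 _ _ (Or.inl (by omega))⟩
    · exact ⟨k-2, by omega, 0, Nat.zero_le _, adj1 _ _ (Or.inr (by omega))⟩
    · exact ⟨0, Nat.zero_le _, 0, Nat.zero_le _, adjk _ _ (Or.inr (by omega))⟩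
    · exact ⟨1, by omega, 0, Nat.zero_le _, adjk _ _ (Or.inr (by omega))⟩
    · exact ⟨0, Nat.zero_le _, m-k-1, by omega, (adj1 _ _ (Or.inl (by omega))).symm⟩

lemma sg_two (q t : ℕ) (hq : q = 2*t+3) :
    HasMinor (SGraph 2 q) (⊤ : SimpleGraph (Fin 5)) := by
  have hn2 : 1 < 2 + q := by omega
  have hz : ((2+q : ℕ) : ZMod (2+q)) = 0 := ZMod.natCast_self _
  push_cast at hz
  have adj1 : ∀ a b : ℕ, (b = a + 1 ∨ b + (2+q) = a + 1) →
      (SGraph 2 q).Adj (a : ZMod (2+q)) (b : ZMod (2+q)) := by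
    intro a b h
    have base := sg_adj_one 2 q hn2 (a : ZMod (2+q))
    have hcast : ((b:ℕ) : ZMod (2+q)) = (a : ZMod (2+q)) + 1 := by
      rcases h with rfl | h
      · push_cast; ring
      · have e : ((b + (2+q) : ℕ) : ZMod (2+q)) = ((a+1 : ℕ) : ZMod (2+q)) := by rw [h]
        push_cast at e
        linear_combination e - hz
    rwa [← hcast] at base
  have adj2 : ∀ a b : ℕ, (b = a + 2 ∨ b + (2+q) = a + 2) →
      (SGraph 2 q).Adj (a : ZMod (2+q)) (b : ZMod (2+q)) := by
    intro a b h
    have base := sg_adj_p 2 q (by omega) (by omega) (a : ZMod (2+q))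
    have hcast : ((b:ℕ) : ZMod (2+q)) = (a : ZMod (2+q)) + ((2:ℕ) : ZMod (2+q)) := by
      rcases h with rfl | h
      · push_cast; ring
      · have e : ((b + (2+q) : ℕ) : ZMod (2+q)) = ((a+2 : ℕ) : ZMod (2+q)) := by rw [h]
        push_cast at e
        linear_combination e - hz
    rwa [← hcast] at base
  apply hasMinor_K5_of_chains (SGraph 2 q)
    (fun w i => ((![0, 1, 2*t+2, 2*t+3, 2*t+4] w + 2*i : ℕ) : ZMod (2+q)))
    ![t,t,0,0,0]
  · intro w i hi
    exact adj2 _ _ (Or.inl (by omega))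
  · intro w₁ w₂ hne i hi j hj heq
    clear adj1 adj2 hz
    have hb1 : ![0, 1, 2*t+2, 2*t+3, 2*t+4] w₁ + 2*i < 2 + q := by
      fin_cases w₁ <;> simp only [Fin.zero_eta, Fin.mk_one, Fin.reduceFinMk, Fin.isValue,
        Matrix.cons_val_zero, Matrix.cons_val_one, Matrix.head_cons, Matrix.cons_val_two,
        Matrix.tail_cons, Matrix.cons_val_three, Matrix.cons_val_four] at hi ⊢ <;> omega
    have hb2 : ![0, 1, 2*t+2, 2*t+3, 2*t+4] w₂ + 2*j < 2 + q := by
      fin_cases w₂ <;> simp only [Fin.zero_eta, Fin.mk_one, Fin.reduceFinMk, Fin.isValue,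
        Matrix.cons_val_zero, Matrix.cons_val_one, Matrix.head_cons, Matrix.cons_val_two,
        Matrix.tail_cons, Matrix.cons_val_three, Matrix.cons_val_four] at hj ⊢ <;> omega
    have hnat := zmod_natCast_inj hb1 hb2 heq
    clear heq hb1 hb2
    fin_cases w₁ <;> fin_cases w₂ <;>
      first
        | exact absurd rfl hne
        | (simp only [Fin.zero_eta, Fin.mk_one, Fin.reduceFinMk, Fin.isValue,
            Matrix.cons_val_zero, Matrix.cons_val_one, Matrix.head_cons, Matrix.cons_val_two,
            Matrix.tail_cons, Matrix.cons_val_three, Matrix.cons_val_four] at hnat hi hj; omega)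
  · intro w₁ w₂ hne
    fin_cases w₁ <;> fin_cases w₂ <;>
      first
        | exact absurd rfl hne
        | simp only [Fin.zero_eta, Fin.mk_one, Fin.reduceFinMk, Fin.isValue,
            Matrix.cons_val_zero, Matrix.cons_val_one, Matrix.head_cons, Matrix.cons_val_two,
            Matrix.tail_cons, Matrix.cons_val_three, Matrix.cons_val_four]
    · exact ⟨0, Nat.zero_le _, 0, Nat.zero_le _, adj1 _ _ (Or.inl (by omega))⟩
    · exact ⟨t, le_rfl, 0, Nat.zero_le _, adj2 _ _ (Or.inl (by omega))⟩
    · exact ⟨0, Nat.zero_le _, 0, Nat.zero_le _, (adj2 _ _ (Or.inr (by omega))).symm⟩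
    · exact ⟨0, Nat.zero_le _, 0, Nat.zero_le _, (adj1 _ _ (Or.inr (by omega))).symm⟩
    · exact ⟨0, Nat.zero_le _, 0, Nat.zero_le _, (adj1 _ _ (Or.inl (by omega))).symm⟩
    · exact ⟨t, le_rfl, 0, Nat.zero_le _, adj1 _ _ (Or.inl (by omega))⟩
    · exact ⟨t, le_rfl, 0, Nat.zero_le _, adj2 _ _ (Or.inl (by omega))⟩
    · exact ⟨0, Nat.zero_le _, 0, Nat.zero_le _, (adj2 _ _ (Or.inr (by omega))).symm⟩
    · exact ⟨0, Nat.zero_le _, t, le_rfl, (adj2 _ _ (Or.inl (by omega))).symm⟩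
    · exact ⟨0, Nat.zero_le _, t, le_rfl, (adj1 _ _ (Or.inl (by omega))).symm⟩
    · exact ⟨0, Nat.zero_le _, 0, Nat.zero_le _, adj1 _ _ (Or.inl (by omega))⟩
    · exact ⟨0, Nat.zero_le _, 0, Nat.zero_le _, adj2 _ _ (Or.inl (by omega))⟩
    · exact ⟨0, Nat.zero_le _, 0, Nat.zero_le _, adj2 _ _ (Or.inr (by omega))⟩
    · exact ⟨0, Nat.zero_le _, t, le_rfl, (adj2 _ _ (Or.inl (by omega))).symm⟩
    · exact ⟨0, Nat.zero_le _, 0, Nat.zero_le _, (adj1 _ _ (Or.inl (by omega))).symm⟩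
    · exact ⟨0, Nat.zero_le _, 0, Nat.zero_le _, adj1 _ _ (Or.inl (by omega))⟩
    · exact ⟨0, Nat.zero_le _, 0, Nat.zero_le _, adj1 _ _ (Or.inr (by omega))⟩
    · exact ⟨0, Nat.zero_le _, 0, Nat.zero_le _, adj2 _ _ (Or.inr (by omega))⟩
    · exact ⟨0, Nat.zero_le _, 0, Nat.zero_le _, (adj2 _ _ (Or.inl (by omega))).symm⟩
    · exact ⟨0, Nat.zero_le _, 0, Nat.zero_le _, (adj1 _ _ (Or.inl (by omega))).symm⟩

/-- For coprime positive integers `p ≥ 2`, `q ≥ 3`, the graph `S(p,q)` contains `K₅`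
as a minor, and hence is nonplanar. -/
theorem SGraph_hasK5Minor_nonplanar (p q : ℕ) (hp : 2 ≤ p) (hq : 3 ≤ q)
    (hcop : Nat.Coprime p q) :
    HasMinor (SGraph p q) (⊤ : SimpleGraph (Fin 5)) ∧ ¬ IsPlanar (SGraph p q) := by
  have k5 : HasMinor (SGraph p q) (⊤ : SimpleGraph (Fin 5)) := by
    rcases eq_or_lt_of_le hp with hp2 | hp3
    · -- p = 2
      obtain ⟨t, ht⟩ : ∃ t, q = 2*t+3 := by
        rcases Nat.even_or_odd q with he | ho
        · exfalso
          have h2 : (2:ℕ) ∣ q := he.two_dvd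
          have hdvd : (2:ℕ) ∣ Nat.gcd p q := Nat.dvd_gcd (by omega) h2
          rw [Nat.Coprime] at hcop
          rw [hcop] at hdvd
          omega
        · obtain ⟨r, hr⟩ := ho
          exact ⟨r-1, by omega⟩
      rw [← hp2]
      exact sg_two q t ht
    · -- 3 ≤ p
      rcases lt_trichotomy p q with h | h | h
      · exact sg_master p q p q (by omega) h rfl
          (fun x => sg_adj_p p q (by omega) (by omega) x)
      · exfalso
        rw [h, Nat.Coprime, Nat.gcd_self] at hcop
        omega
      · exact sg_master p q q p (by omega) h (by omega)
          (fun x => sg_adj_q p q (by omega) (by omega) x)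
  exact ⟨k5, fun hpl => hpl.1 k5⟩
end

section
/- For coprime positive integers p, q with p ≥ 2, let p' be the inverse of p modulo p+q with 0 < p' < p+q and q' = (p+q) - p'. Then relabeling the vertices of S(p,q) via j ↦ k where kp ≡ j (mod p+q) gives a graph isomorphism from S(p,q) to S(p', q'). -/
/-- For coprime positive integers `p, q` with `p ≥ 2`, if `p'` is the inverse of `p`
modulo `p+q` with `0 < p' < p+q` and `q' = (p+q) - p'`, then relabeling the vertices of
`S(p,q)` via `j ↦ k` where `k * p ≡ j (mod p+q)` (i.e. `p * k ↦ k`) gives a graph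
isomorphism from `S(p,q)` to `S(p',q')`. -/
theorem SGraph_invert_iso (p q p' : ℕ) (hp : 2 ≤ p) (hq : 0 < q) (hcop : Nat.Coprime p q)
    (h0 : 0 < p') (hlt : p' < p + q) (hinv : (p * p') % (p + q) = 1) :
    ∃ e : SGraph p q ≃g SGraph p' ((p + q) - p'),
      ∀ k : ZMod (p + q),
        e ((p : ZMod (p + q)) * k) = (k.val : ZMod (p' + ((p + q) - p'))) := by
  have hn : p' + ((p + q) - p') = p + q := Nat.add_sub_cancel' hlt.le
  haveI : NeZero (p + q) := ⟨by omega⟩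
  have hmul : (p : ZMod (p + q)) * (p' : ZMod (p + q)) = 1 := by
    have : ((p * p' : ℕ) : ZMod (p + q)) = ((1 : ℕ) : ZMod (p + q)) := by
      rw [← ZMod.natCast_mod, hinv]
    simpa using this
  have hmul' : (p' : ZMod (p + q)) * (p : ZMod (p + q)) = 1 := by
    rw [mul_comm]; exact hmul
  let ψ : ZMod (p + q) ≃+* ZMod (p' + ((p + q) - p')) := ZMod.ringEquivCongr hn.symm
  have hinj : ∀ x y : ZMod (p + q),
      ψ ((p' : ZMod (p + q)) * x) = ψ ((p' : ZMod (p + q)) * y) ↔ x = y := by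
    intro x y
    constructor
    · intro h
      have h2 : (p' : ZMod (p + q)) * x = (p' : ZMod (p + q)) * y := ψ.injective h
      have := congrArg (fun z => (p : ZMod (p + q)) * z) h2
      simpa [← mul_assoc, hmul] using this
    · intro h; rw [h]
  have hone : (1 : ZMod (p' + ((p + q) - p'))) =
      ψ ((p' : ZMod (p + q)) * (p : ZMod (p + q))) := by
    rw [hmul', map_one]
  have hgen : ((p' : ℕ) : ZMod (p' + ((p + q) - p'))) =
      ψ ((p' : ZMod (p + q)) * 1) := by
    rw [mul_one, map_natCast]
  refine ⟨{ toFun := fun x => ψ ((p' : ZMod (p + q)) * x)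
            invFun := fun y => (p : ZMod (p + q)) * ψ.symm y
            left_inv := ?_
            right_inv := ?_
            map_rel_iff' := ?_ }, ?_⟩
  · intro x
    simp [← mul_assoc, hmul]
  · intro y
    simp [← mul_assoc, hmul']
  · intro a b
    show SimpleGraph.Adj _ (ψ ((p' : ZMod (p + q)) * a)) (ψ ((p' : ZMod (p + q)) * b)) ↔ _
    simp only [SGraph, SimpleGraph.fromRel_adj]
    rw [hone, hgen]
    simp only [← map_add, ← mul_add, hinj, ne_eq]
    tauto
  · intro k
    show ψ ((p' : ZMod (p + q)) * ((p : ZMod (p + q)) * k)) = _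
    rw [← mul_assoc, hmul', one_mul]
    conv_lhs => rw [show k = ((k.val : ℕ) : ZMod (p + q)) from (ZMod.natCast_rightInverse k).symm]
    rw [map_natCast]
end
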